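/- arXiv:1402.2199 — 3 statements merged into one kernel-verified Lean document; each statement's English description precedes it below -/
import Mathlib

section
/- Let Z, X be Banach spaces, r > 0, and let η : [-r,0] → L(Z,X) be of bounded variation with total variation |η|([-r,0]). Define F : C([-r,0];Z) → X by Fφ = ∫_{-r}^0 dη(θ) φ(θ). Then for every T ≥ 0 and every continuous y : [-r,T] → Z, the function t ↦ F(y_t), where y_t(θ) = y(t+θ), satisfies ∫_0^T ‖F y_t‖_X² dt ≤ |η|([-r,0])² · ∫_{-r}^T ‖y(t)‖_Z² dt. -/
/-!
Bounding `‖F y_t‖` by `∫ ‖y (t + θ)‖ dμ(θ)` and applying Cauchy–Schwarz against the finite measure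
`μ` on `[-r, 0]` gives `‖F y_t‖² ≤ μ([-r, 0]) ∫ ‖y (t + θ)‖² dμ(θ)`. Integrating in `t` and swapping
the integrals (Fubini), each inner integral `∫₀ᵀ ‖y (t + θ)‖² dt` is a translate of a piece of
`∫_{-r}^T ‖y‖²`, which produces the second factor `μ([-r, 0])`.
-/

open MeasureTheory Set

theorem sq_integral_le_measureReal_mul_integral_sq {α : Type*} [MeasurableSpace α]
    {ν : Measure α} [IsFiniteMeasure ν] {f : α → ℝ} (hf : Integrable f ν)
    (hf2 : Integrable (fun x => f x ^ 2) ν) :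
    (∫ x, f x ∂ν) ^ 2 ≤ ν.real univ * ∫ x, f x ^ 2 ∂ν := by
  rcases eq_zero_or_neZero ν with rfl | hν
  · simp
  set V := ν.real univ
  set m := (∫ x, f x ∂ν) / V
  have hV : 0 < V := measureReal_univ_pos
  -- AM-GM: `2 m f ≤ f ^ 2 + m ^ 2` pointwise, with `m` the mean of `f`
  have hamgm : ∫ x, 2 * m * f x ∂ν ≤ ∫ x, (f x ^ 2 + m ^ 2) ∂ν :=
    integral_mono (hf.const_mul _) (hf2.add (integrable_const _))
      fun x => by nlinarith [sq_nonneg (f x - m)]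
  rw [integral_const_mul, integral_add hf2 (integrable_const _), integral_const,
    smul_eq_mul] at hamgm
  rw [show ∫ x, f x ∂ν = m * V from (div_mul_cancel₀ _ hV.ne').symm] at hamgm ⊢
  nlinarith

theorem sq_setIntegral_le_measureReal_mul_setIntegral_sq {α : Type*} [MeasurableSpace α]
    [TopologicalSpace α] [OpensMeasurableSpace α] [T2Space α] {ν : Measure α}
    [IsFiniteMeasureOnCompacts ν] {K : Set α} (hK : IsCompact K) {f : α → ℝ}
    (hf : ContinuousOn f K) :
    (∫ x in K, f x ∂ν) ^ 2 ≤ ν.real K * ∫ x in K, f x ^ 2 ∂ν := by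
  have : IsFiniteMeasure (ν.restrict K) := isFiniteMeasure_restrict.2 hK.measure_lt_top.ne
  rw [← measureReal_restrict_apply_univ]
  exact sq_integral_le_measureReal_mul_integral_sq (hf.integrableOn_compact hK)
    ((hf.pow 2).integrableOn_compact hK)

section Translate

variable {ν : Measure ℝ} [IsFiniteMeasureOnCompacts ν] {u : ℝ → ℝ} {a b c d : ℝ}

theorem mapsTo_add_Icc_prod :
    MapsTo (fun p : ℝ × ℝ => p.1 + p.2) (Icc a b ×ˢ Icc c d) (Icc (a + c) (b + d)) :=
  fun _ ⟨⟨ha, hb⟩, ⟨hc, hd⟩⟩ => ⟨add_le_add ha hc, add_le_add hb hd⟩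

theorem integrable_comp_add_restrict_prod (hu : ContinuousOn u (Icc (a + c) (b + d))) :
    Integrable (fun p : ℝ × ℝ => u (p.1 + p.2))
      ((volume.restrict (Icc a b)).prod (ν.restrict (Icc c d))) := by
  rw [Measure.prod_restrict]
  exact (hu.comp continuous_add.continuousOn mapsTo_add_Icc_prod).integrableOn_compact
    (isCompact_Icc.prod isCompact_Icc)

theorem setIntegral_Icc_comp_add_le (hu : ContinuousOn u (Icc (a + c) (b + d)))
    (hu0 : ∀ x ∈ Icc (a + c) (b + d), 0 ≤ u x) {θ : ℝ} (hθ : θ ∈ Icc c d) :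
    ∫ t in Icc a b, u (t + θ) ≤ ∫ x in Icc (a + c) (b + d), u x := by
  have htrans : ∫ t in Icc a b, u (t + θ) = ∫ x in Icc (a + θ) (b + θ), u x := by
    have := (measurePreserving_add_right volume θ).setIntegral_preimage_emb
      (measurableEmbedding_addRight θ) u (Icc (a + θ) (b + θ))
    rwa [preimage_add_const_Icc, add_sub_cancel_right, add_sub_cancel_right] at this
  rw [htrans]
  exact setIntegral_mono_set (hu.integrableOn_compact isCompact_Icc)
    (ae_restrict_of_forall_mem measurableSet_Icc hu0)
    (Icc_subset_Icc (by linarith [hθ.1]) (by linarith [hθ.2])).eventuallyLE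

theorem integral_Icc_setIntegral_comp_add_le (hu : ContinuousOn u (Icc (a + c) (b + d)))
    (hu0 : ∀ x ∈ Icc (a + c) (b + d), 0 ≤ u x) :
    ∫ t in Icc a b, ∫ θ in Icc c d, u (t + θ) ∂ν
      ≤ ν.real (Icc c d) * ∫ x in Icc (a + c) (b + d), u x := by
  have hint := integrable_comp_add_restrict_prod (ν := ν) hu
  have : IsFiniteMeasure (ν.restrict (Icc c d)) :=
    isFiniteMeasure_restrict.2 measure_Icc_lt_top.ne
  calc ∫ t in Icc a b, ∫ θ in Icc c d, u (t + θ) ∂ν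
      = ∫ θ in Icc c d, (∫ t in Icc a b, u (t + θ)) ∂ν := integral_integral_swap hint
    _ ≤ ∫ θ in Icc c d, (∫ x in Icc (a + c) (b + d), u x) ∂ν :=
        setIntegral_mono_on hint.integral_prod_right (integrable_const _) measurableSet_Icc
          fun θ hθ => setIntegral_Icc_comp_add_le hu hu0 hθ
    _ = ν.real (Icc c d) * ∫ x in Icc (a + c) (b + d), u x := by
        rw [setIntegral_const, smul_eq_mul]

end Translate

theorem stmt0_general {Z X : Type*} [NormedAddCommGroup Z] [NormedSpace ℝ Z]
    [NormedAddCommGroup X] [NormedSpace ℝ X]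
    (r : ℝ) (μ : Measure ℝ) [IsFiniteMeasure μ]
    (F : (ℝ → Z) → X)
    (hF : ∀ φ : ℝ → Z, ContinuousOn φ (Set.Icc (-r) 0) →
      ‖F φ‖ ≤ ∫ θ in Set.Icc (-r) 0, ‖φ θ‖ ∂μ)
    (T : ℝ) (y : ℝ → Z) (hy : ContinuousOn y (Set.Icc (-r) T)) :
    ∫ t in Set.Icc (0:ℝ) T, ‖F (fun θ => y (t + θ))‖ ^ 2
      ≤ (μ (Set.Icc (-r) 0)).toReal ^ 2 * ∫ t in Set.Icc (-r) T, ‖y t‖ ^ 2 := by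
  have hy' : ContinuousOn y (Icc (0 + -r) (T + 0)) := by rwa [zero_add, add_zero]
  have hshift (t : ℝ) (ht : t ∈ Icc 0 T) : ContinuousOn (fun θ => y (t + θ)) (Icc (-r) 0) :=
    hy'.comp (continuous_const_add t).continuousOn fun θ hθ =>
      mapsTo_add_Icc_prod (⟨ht, hθ⟩ : (t, θ) ∈ Icc 0 T ×ˢ Icc (-r) 0)
  have hpointwise : ∀ t ∈ Icc 0 T, ‖F (fun θ => y (t + θ))‖ ^ 2
      ≤ μ.real (Icc (-r) 0) * ∫ θ in Icc (-r) 0, ‖y (t + θ)‖ ^ 2 ∂μ := fun t ht =>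
    calc ‖F (fun θ => y (t + θ))‖ ^ 2 ≤ (∫ θ in Icc (-r) 0, ‖y (t + θ)‖ ∂μ) ^ 2 := by
          gcongr; exact hF _ (hshift t ht)
      _ ≤ _ := sq_setIntegral_le_measureReal_mul_setIntegral_sq isCompact_Icc (hshift t ht).norm
  have hnorm_sq : ContinuousOn (fun x => ‖y x‖ ^ 2) (Icc (0 + -r) (T + 0)) := hy'.norm.pow 2
  calc ∫ t in Icc 0 T, ‖F (fun θ => y (t + θ))‖ ^ 2
      ≤ ∫ t in Icc 0 T, μ.real (Icc (-r) 0) * ∫ θ in Icc (-r) 0, ‖y (t + θ)‖ ^ 2 ∂μ :=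
        integral_mono_of_nonneg (.of_forall fun _ => by positivity)
          ((integrable_comp_add_restrict_prod hnorm_sq).integral_prod_left.const_mul _)
          (ae_restrict_of_forall_mem measurableSet_Icc hpointwise)
    _ ≤ μ.real (Icc (-r) 0) *
          (μ.real (Icc (-r) 0) * ∫ x in Icc (0 + -r) (T + 0), ‖y x‖ ^ 2) := by
        rw [integral_const_mul]
        gcongr
        exact integral_Icc_setIntegral_comp_add_le hnorm_sq fun _ _ => by positivity
    _ = (μ (Icc (-r) 0)).toReal ^ 2 * ∫ t in Icc (-r) T, ‖y t‖ ^ 2 := by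
        rw [zero_add, add_zero, ← mul_assoc, ← sq, measureReal_def]

/-- estimate for the delay operator given by a Stieltjes measure
(abstracted via its total variation measure `μ`). -/
theorem stmt0 {Z X : Type*} [NormedAddCommGroup Z] [NormedSpace ℝ Z]
    [NormedAddCommGroup X] [NormedSpace ℝ X]
    (r : ℝ) (hr : 0 < r) (μ : Measure ℝ) [IsFiniteMeasure μ]
    (F : (ℝ → Z) → X)
    (hF : ∀ φ : ℝ → Z, ContinuousOn φ (Set.Icc (-r) 0) →
      ‖F φ‖ ≤ ∫ θ in Set.Icc (-r) 0, ‖φ θ‖ ∂μ)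
    (T : ℝ) (hT : 0 ≤ T) (y : ℝ → Z) (hy : ContinuousOn y (Set.Icc (-r) T)) :
    ∫ t in Set.Icc (0:ℝ) T, ‖F (fun θ => y (t + θ))‖ ^ 2
      ≤ (μ (Set.Icc (-r) 0)).toReal ^ 2 * ∫ t in Set.Icc (-r) T, ‖y t‖ ^ 2 :=
  stmt0_general r μ F hF T y hy
end

section
/- Let r > 0 and β ∈ L¹([-r,0];ℝ) with ∫_{-r}^0 |β(θ)| dθ < 1. Define n(λ) = 1 + ∫_{-r}^0 β(θ) e^{λθ} dθ for λ ∈ ℂ. Then there exists μ > 0 such that every λ ∈ ℂ with n(λ) = 0 satisfies Re λ ≤ -μ. -/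
/-!
For `Re λ > -μ` and `θ ∈ [-r, 0]` we have `|e^{λθ}| ≤ e^{μr}`, so the integral term of `n(λ)` has
modulus at most `‖β‖₁ e^{μr}`. Since `‖β‖₁ < 1`, continuity in `μ` gives some `μ > 0` with
`‖β‖₁ e^{μr} < 1`; then `n(λ) ≠ 0` whenever `Re λ > -μ`.
-/

open MeasureTheory

lemma norm_cexp_mul_ofReal_le {r μ θ : ℝ} {lam : ℂ} (hμ₀ : 0 ≤ μ) (hμ : -μ ≤ lam.re)
    (hθ : θ ∈ Set.Icc (-r) 0) : ‖Complex.exp (lam * θ)‖ ≤ Real.exp (μ * r) := by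
  rw [Complex.norm_exp, Complex.re_mul_ofReal, Real.exp_le_exp]
  nlinarith [mul_nonneg hμ₀ (neg_le_iff_add_nonneg.mp hθ.1),
    mul_nonneg (neg_le_iff_add_nonneg'.mp hμ) (neg_nonneg.mpr hθ.2)]

lemma norm_setIntegral_mul_cexp_le {r μ : ℝ} {β : ℝ → ℝ} (hβ : IntegrableOn β (Set.Icc (-r) 0))
    {lam : ℂ} (hμ₀ : 0 ≤ μ) (hμ : -μ ≤ lam.re) :
    ‖∫ θ in Set.Icc (-r) 0, (β θ : ℂ) * Complex.exp (lam * θ)‖ ≤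
      (∫ θ in Set.Icc (-r) 0, |β θ|) * Real.exp (μ * r) := by
  have hexp_bound : ∀ᵐ θ : ℝ ∂volume.restrict (Set.Icc (-r) 0),
      ‖Complex.exp (lam * θ)‖ ≤ Real.exp (μ * r) :=
    (ae_restrict_iff' measurableSet_Icc).mpr (ae_of_all _ fun _ ↦ norm_cexp_mul_ofReal_le hμ₀ hμ)
  have hint : IntegrableOn (fun θ : ℝ ↦ (β θ : ℂ) * Complex.exp (lam * θ)) (Set.Icc (-r) 0) :=
    hβ.ofReal.mul_bdd (by fun_prop) hexp_bound
  calc ‖∫ θ in Set.Icc (-r) 0, (β θ : ℂ) * Complex.exp (lam * θ)‖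
      ≤ ∫ θ in Set.Icc (-r) 0, ‖(β θ : ℂ) * Complex.exp (lam * θ)‖ :=
        norm_integral_le_integral_norm _
    _ ≤ ∫ θ in Set.Icc (-r) 0, |β θ| * Real.exp (μ * r) := by
        refine setIntegral_mono_on hint.norm (hβ.abs.mul_const _) measurableSet_Icc fun θ hθ ↦ ?_
        rw [norm_mul, Complex.norm_real, Real.norm_eq_abs]
        exact mul_le_mul_of_nonneg_left (norm_cexp_mul_ofReal_le hμ₀ hμ hθ) (abs_nonneg _)
    _ = (∫ θ in Set.Icc (-r) 0, |β θ|) * Real.exp (μ * r) := integral_mul_const _ _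

lemma exists_pos_mul_exp_mul_lt_one {a : ℝ} (ha : a < 1) (r : ℝ) :
    ∃ μ > (0 : ℝ), a * Real.exp (μ * r) < 1 := by
  have hcont : Continuous fun μ : ℝ ↦ a * Real.exp (μ * r) := by fun_prop
  have hnear : ∀ᶠ μ in nhdsWithin 0 (Set.Ioi 0), a * Real.exp (μ * r) < 1 :=
    nhdsWithin_le_nhds <| hcont.continuousAt.eventually_lt continuousAt_const (by simpa using ha)
  obtain ⟨μ, hlt, hμ⟩ := (hnear.and self_mem_nhdsWithin).exists
  exact ⟨μ, hμ, hlt⟩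

theorem stmt2_general (r : ℝ) (β : ℝ → ℝ)
    (hβ : IntegrableOn β (Set.Icc (-r) 0))
    (hβ1 : (∫ θ in Set.Icc (-r) 0, |β θ|) < 1) :
    ∃ μ > (0:ℝ), ∀ lam : ℂ,
      (1 + ∫ θ in Set.Icc (-r) 0, (β θ : ℂ) * Complex.exp (lam * (θ : ℂ))) = 0 →
      lam.re ≤ -μ := by
  obtain ⟨μ, hμ, hsmall⟩ := exists_pos_mul_exp_mul_lt_one hβ1 r
  refine ⟨μ, hμ, fun lam hzero ↦ ?_⟩
  by_contra! hre
  have hint_eq : (∫ θ in Set.Icc (-r) 0, (β θ : ℂ) * Complex.exp (lam * θ)) = -1 :=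
    eq_neg_of_add_eq_zero_right hzero
  have hle := norm_setIntegral_mul_cexp_le hβ hμ.le hre.le
  rw [hint_eq, norm_neg, norm_one] at hle
  linarith

/-- zeros of the distributed-delay characteristic kernel stay
uniformly in the open left half-plane when `‖β‖_{L¹} < 1`. -/
theorem stmt2 (r : ℝ) (hr : 0 < r) (β : ℝ → ℝ)
    (hβ : IntegrableOn β (Set.Icc (-r) 0))
    (hβ1 : (∫ θ in Set.Icc (-r) 0, |β θ|) < 1) :
    ∃ μ > (0:ℝ), ∀ lam : ℂ,
      (1 + ∫ θ in Set.Icc (-r) 0, (β θ : ℂ) * Complex.exp (lam * (θ : ℂ))) = 0 →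
      lam.re ≤ -μ :=
  stmt2_general r β hβ hβ1
end

section
/- Let r > 0 and α ∈ ℝ with |α| < 1, and n(λ) = 1 + α e^{-λr}. Then for every λ ∈ ℂ with Re λ > 0, the quotient z = λ / n(λ) satisfies |arg z| < π/2 + θ, where θ = arctan(|α|/(1-|α|)) < π/2. In particular, if Σ = {z : |arg z| < π/2 + θ}, then z ∈ Σ and hence z stays at positive distance from any closed set contained in (-∞, -c₀] with c₀ > 0. -/
/-!
Since `‖α e^{-λr}‖ ≤ |α| < 1`, the denominator `n = 1 + α e^{-λr}` lies in the half-plane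
`Re n ≥ 1 - |α|` with `|Im n| ≤ |α|`, so `|arg n| ≤ arctan (|α| / (1 - |α|)) = θ`.
Both `λ` and `n` have arguments in `(-π/2, π/2)`, so their difference lies in `(-π, π)` and
equals `arg (λ / n)`; hence `|arg (λ / n)| < π/2 + θ < π`, which excludes the negative real axis.
-/

open scoped Real

namespace Complex

lemma arg_div_eq_sub_arg_iff {x y : ℂ} (hx : x ≠ 0) (hy : y ≠ 0) :
    arg (x / y) = arg x - arg y ↔ arg x - arg y ∈ Set.Ioc (-π) π := by
  rw [← arg_coe_angle_toReal_eq_arg, arg_div_coe_angle hx hy, ← Real.Angle.coe_sub,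
    Real.Angle.toReal_coe_eq_self_iff_mem_Ioc]

lemma abs_arg_div_lt_pi_div_two_add {x y : ℂ} (hx : 0 < x.re) (hy : 0 < y.re) :
    |arg (x / y)| < π / 2 + |arg y| := by
  have hx' := abs_arg_lt_pi_div_two_iff.2 (Or.inl hx)
  have hy' := abs_lt.1 (abs_arg_lt_pi_div_two_iff.2 (Or.inl hy))
  have hdiff : |arg x - arg y| < π / 2 + |arg y| :=
    (abs_sub _ _).trans_lt (add_lt_add_of_lt_of_le hx' le_rfl)
  have hsub : arg (x / y) = arg x - arg y := by
    refine (arg_div_eq_sub_arg_iff (ne_of_apply_ne re hx.ne') (ne_of_apply_ne re hy.ne')).2 ?_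
    have := abs_lt.1 hx'
    constructor <;> linarith
  rwa [hsub]

lemma arg_eq_arctan_of_re_pos {z : ℂ} (hz : 0 < z.re) : arg z = Real.arctan (z.im / z.re) := by
  have h := abs_lt.1 (abs_arg_lt_pi_div_two_iff.2 (Or.inl hz))
  rw [← tan_arg, Real.arctan_tan h.1 h.2]

lemma abs_arg_le_arctan_of_abs_im_le {z : ℂ} {c : ℝ} (hz : 0 < z.re) (h : |z.im| ≤ c * z.re) :
    |arg z| ≤ Real.arctan c := by
  have hc : |z.im / z.re| ≤ c := by
    rwa [abs_div, abs_of_pos hz, div_le_iff₀ hz]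
  have hc' := abs_le.1 hc
  rw [arg_eq_arctan_of_re_pos hz, abs_le, ← Real.arctan_neg]
  exact ⟨Real.arctan_strictMono.monotone (by linarith), Real.arctan_strictMono.monotone hc'.2⟩

lemma one_sub_norm_le_re_one_add (w : ℂ) : 1 - ‖w‖ ≤ (1 + w).re := by
  have := neg_le_of_abs_le (abs_re_le_norm w)
  simp only [add_re, one_re]
  linarith

lemma abs_arg_one_add_le_arctan {w : ℂ} {a : ℝ} (hw : ‖w‖ ≤ a) (ha : a < 1) :
    |arg (1 + w)| ≤ Real.arctan (a / (1 - a)) := by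
  have hre : 1 - a ≤ (1 + w).re := by linarith [one_sub_norm_le_re_one_add w]
  have him : |(1 + w).im| ≤ a := by
    simpa only [add_im, one_im, zero_add] using (abs_im_le_norm w).trans hw
  refine abs_arg_le_arctan_of_abs_im_le (by linarith) ?_
  rw [div_mul_eq_mul_div, le_div_iff₀ (by linarith)]
  nlinarith [norm_nonneg w]

lemma norm_ofReal_mul_exp_neg_le {α : ℝ} {z : ℂ} (hz : 0 ≤ z.re) :
    ‖(α : ℂ) * exp (-z)‖ ≤ |α| := by
  rw [norm_mul, norm_real, Real.norm_eq_abs, norm_exp, neg_re]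
  exact mul_le_of_le_one_right (abs_nonneg α) (Real.exp_le_one_iff.2 (neg_nonpos.2 hz))

end Complex

open Complex in
/-- the quotient `lam / n(lam)` lies in the sector
`|arg z| < π/2 + θ` with `θ = arctan (|α|/(1-|α|)) < π/2`; in particular it
avoids the half-line `(-∞, -c₀]` for every `c₀ > 0`. -/
theorem stmt10 (r α : ℝ) (hr : 0 < r) (hα : |α| < 1) (lam : ℂ)
    (hlam : 0 < lam.re) :
    Real.arctan (|α| / (1 - |α|)) < Real.pi / 2 ∧
    |Complex.arg (lam / (1 + (α : ℂ) * Complex.exp (-(lam * (r : ℂ)))))| <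
      Real.pi / 2 + Real.arctan (|α| / (1 - |α|)) ∧
    (∀ c₀ : ℝ, 0 < c₀ →
      lam / (1 + (α : ℂ) * Complex.exp (-(lam * (r : ℂ)))) ∉
        {z : ℂ | z.im = 0 ∧ z.re ≤ -c₀}) := by
  set w := (α : ℂ) * exp (-(lam * (r : ℂ)))
  have hθ : Real.arctan (|α| / (1 - |α|)) < π / 2 := Real.arctan_lt_pi_div_two _
  have hw : ‖w‖ ≤ |α| := norm_ofReal_mul_exp_neg_le (by simpa using (mul_pos hlam hr).le)
  have hn : 0 < (1 + w).re := by linarith [one_sub_norm_le_re_one_add w]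
  have hsector : |arg (lam / (1 + w))| < π / 2 + Real.arctan (|α| / (1 - |α|)) :=
    (abs_arg_div_lt_pi_div_two_add hlam hn).trans_le
      (add_le_add_right (abs_arg_one_add_le_arctan hw hα) _)
  refine ⟨hθ, hsector, fun c₀ hc₀ ⟨him, hre⟩ => ?_⟩
  have hpi : arg (lam / (1 + w)) = π := arg_eq_pi_iff.2 ⟨by linarith, him⟩
  rw [hpi, abs_of_pos Real.pi_pos] at hsector
  linarith
end
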